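/- arXiv:1703.04083 — 4 statements merged into one kernel-verified Lean document; each statement's English description precedes it below -/
import Mathlib

section
/- Let R be a commutative local ring in which 2 is invertible and let α ∈ O_R(h). Then there exists a unit u ∈ R such that α = [[u,0],[0,u⁻¹]] or α = [[0,u],[u⁻¹,0]]. -/
/-!
STATEMENT 2: Let R be a commutative local ring in which 2 is invertible and let α ∈ O_R(h).
Then there exists a unit u ∈ R such that α = [[u,0],[0,u⁻¹]] or α = [[0,u],[u⁻¹,0]].
-/

open Matrix

theorem orthogonal_hyperbolic_plane_local
    (R : Type*) [CommRing R] [IsLocalRing R] [Invertible (2 : R)]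
    (α : Matrix (Fin 2) (Fin 2) R)
    (hα : αᵀ * !![(0:R), 1; 1, 0] * α = !![(0:R), 1; 1, 0]) :
    ∃ u : Rˣ, α = !![(u : R), 0; 0, ((u⁻¹ : Rˣ) : R)] ∨
              α = !![(0 : R), (u : R); ((u⁻¹ : Rˣ) : R), 0] := by
  set a := α 0 0 with ha
  set b := α 0 1 with hb
  set c := α 1 0 with hc
  set d := α 1 1 with hd
  have h00 := congrFun (congrFun hα 0) 0
  have h01 := congrFun (congrFun hα 0) 1
  have h11 := congrFun (congrFun hα 1) 1
  simp [Matrix.mul_apply, Fin.sum_univ_two, Matrix.transpose_apply, ← ha, ← hb, ← hc, ← hd]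
    at h00 h01 h11
  -- h00 : c*a + a*c = 0, h01 : c*b + a*d = 1, h11 : d*b + b*d = 0
  have hac : a * c = 0 := by
    have : (2 : R) * (a * c) = 0 := by ring_nf; ring_nf at h00; linear_combination h00
    have := congrArg (fun x => ⅟(2:R) * x) this
    simpa [← mul_assoc] using this
  have hbd : b * d = 0 := by
    have : (2 : R) * (b * d) = 0 := by ring_nf; ring_nf at h11; linear_combination h11
    have := congrArg (fun x => ⅟(2:R) * x) this
    simpa [← mul_assoc] using this
  have hsum : a * d + b * c = 1 := by linear_combination h01
  rcases IsLocalRing.isUnit_or_isUnit_of_add_one hsum with h | h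
  · have hauni : IsUnit a := isUnit_of_mul_isUnit_left h
    have hduni : IsUnit d := isUnit_of_mul_isUnit_right h
    have hc0 : c = 0 := by
      rcases hauni with ⟨ua, hua⟩
      have := congrArg (fun x => (↑ua⁻¹ : R) * x) hac
      simpa [← hua, ← mul_assoc] using this
    have hb0 : b = 0 := by
      rcases hduni with ⟨ud, hud⟩
      have := congrArg (fun x => x * (↑ud⁻¹ : R)) hbd
      simpa [← hud, mul_assoc] using this
    have had : a * d = 1 := by rw [hc0] at hsum; simpa using hsum
    refine ⟨⟨a, d, had, by linear_combination had⟩, Or.inl ?_⟩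
    rw [Matrix.eta_fin_two α, ← ha, ← hb, ← hc, ← hd, hb0, hc0]
    rfl
  · have hbuni : IsUnit b := isUnit_of_mul_isUnit_left h
    have hcuni : IsUnit c := isUnit_of_mul_isUnit_right h
    have ha0 : a = 0 := by
      rcases hcuni with ⟨uc, huc⟩
      have := congrArg (fun x => x * (↑uc⁻¹ : R)) hac
      simpa [← huc, mul_assoc] using this
    have hd0 : d = 0 := by
      rcases hbuni with ⟨ub, hub⟩
      have := congrArg (fun x => (↑ub⁻¹ : R) * x) hbd
      simpa [← hub, ← mul_assoc] using this
    have hbc : b * c = 1 := by rw [ha0] at hsum; simpa using hsum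
    refine ⟨⟨b, c, hbc, by linear_combination hbc⟩, Or.inr ?_⟩
    rw [Matrix.eta_fin_two α, ← ha, ← hb, ← hc, ← hd, ha0, hd0]
    rfl
end

section
/- Let R be a commutative local ring in which 2 is invertible and take m = 1. Then the subgroup { I_n ⊕ g : g ∈ O_R(h) } of O_R(q ⊥ h) (where g acts on the coordinates (x₁, f₁) of the hyperbolic plane and I_n on the z-block) normalizes the DSER elementary orthogonal group EO_R(q, h). -/
/-!
STATEMENT 4: Let R be a commutative local ring in which 2 is invertible and take m = 1.
Then the subgroup { I_n ⊕ g : g ∈ O_R(h) } of O_R(q ⊥ h) (with g acting on the coordinates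
(x₁, f₁) of the hyperbolic plane and I_n on the z-block) normalizes the DSER elementary
orthogonal group EO_R(q, h).
-/

namespace DSERMat

open Matrix

variable {R : Type*} [CommRing R] [Invertible (2 : R)]

/-- Index type for `Q ⊥ h^m`: the `z`-block, then the `x`-block, then the `f`-block. -/
abbrev Ind (n m : ℕ) := Fin n ⊕ (Fin m ⊕ Fin m)

variable {n m : ℕ}

/-- The Gram matrix `Φ = diag(φ, [[0, I_m],[I_m, 0]])` of `q ⊥ h^m`. -/
def Phi (φ : Matrix (Fin n) (Fin n) R) (m : ℕ) : Matrix (Ind n m) (Ind n m) R :=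
  fromBlocks φ 0 0 (fromBlocks 0 1 1 0)

/-- The elementary matrix `E_α = [[I_n, 0, −α*],[α, I_m, −(1/2)αα*],[0, 0, I_m]]`,
where `α* = φ⁻¹αᵀ`. -/
def Emat (φ : Matrix (Fin n) (Fin n) R) [Invertible φ] (α : Matrix (Fin m) (Fin n) R) :
    Matrix (Ind n m) (Ind n m) R :=
  fromBlocks 1 (fromCols 0 (-(⅟φ * αᵀ))) (fromRows α 0)
    (fromBlocks 1 (-((⅟(2:R)) • (α * (⅟φ * αᵀ)))) 0 1)

/-- The elementary matrix `E*_β = [[I_n, −β*, 0],[0, I_m, 0],[β, −(1/2)ββ*, I_m]]`,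
where `β* = φ⁻¹βᵀ`. -/
def EmatStar (φ : Matrix (Fin n) (Fin n) R) [Invertible φ] (β : Matrix (Fin m) (Fin n) R) :
    Matrix (Ind n m) (Ind n m) R :=
  fromBlocks 1 (fromCols (-(⅟φ * βᵀ)) 0) (fromRows 0 β)
    (fromBlocks 1 0 (-((⅟(2:R)) • (β * (⅟φ * βᵀ)))) 1)

/-- The orthogonal group `O_R(q ⊥ h^m)` of the form `Φ`, as a subgroup of the units of the
matrix ring. -/
def OGrp (φ : Matrix (Fin n) (Fin n) R) (m : ℕ) : Subgroup (Matrix (Ind n m) (Ind n m) R)ˣ where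
  carrier := {g | (g : Matrix (Ind n m) (Ind n m) R)ᵀ * Phi φ m * g = Phi φ m}
  one_mem' := by simp
  mul_mem' := fun {a b} ha hb => by
    show ((↑(a * b) : Matrix (Ind n m) (Ind n m) R))ᵀ * Phi φ m * (↑(a * b) : Matrix _ _ R)
        = Phi φ m
    rw [Units.val_mul, transpose_mul]
    calc (b : Matrix (Ind n m) (Ind n m) R)ᵀ * (a : Matrix _ _ R)ᵀ * Phi φ m *
          ((a : Matrix _ _ R) * (b : Matrix _ _ R))
        = (b : Matrix (Ind n m) (Ind n m) R)ᵀ *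
            ((a : Matrix _ _ R)ᵀ * Phi φ m * (a : Matrix _ _ R)) * (b : Matrix _ _ R) := by
          simp only [mul_assoc]
      _ = Phi φ m := by rw [ha, hb]
  inv_mem' := fun {a} ha => by
    show ((↑a⁻¹ : Matrix (Ind n m) (Ind n m) R))ᵀ * Phi φ m * (↑a⁻¹ : Matrix _ _ R) = Phi φ m
    conv_lhs => rw [← ha]
    calc (↑a⁻¹ : Matrix (Ind n m) (Ind n m) R)ᵀ *
          ((a : Matrix _ _ R)ᵀ * Phi φ m * (a : Matrix _ _ R)) * (↑a⁻¹ : Matrix _ _ R)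
        = ((a : Matrix (Ind n m) (Ind n m) R) * (↑a⁻¹ : Matrix _ _ R))ᵀ * Phi φ m *
            ((a : Matrix _ _ R) * (↑a⁻¹ : Matrix _ _ R)) := by
          rw [transpose_mul]; simp only [mul_assoc]
      _ = Phi φ m := by
          rw [← Units.val_mul, mul_inv_cancel]; simp

/-- The set of elementary generators `E_α`, `E*_β` inside the unit group. -/
def ElemSet (φ : Matrix (Fin n) (Fin n) R) [Invertible φ] (m : ℕ) :
    Set (Matrix (Ind n m) (Ind n m) R)ˣ :=
  {g | ∃ α : Matrix (Fin m) (Fin n) R,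
    (g : Matrix (Ind n m) (Ind n m) R) = Emat φ α ∨
    (g : Matrix (Ind n m) (Ind n m) R) = EmatStar φ α}

/-- The DSER elementary orthogonal group `EO_R(q, h^m)`. -/
def EOGrp (φ : Matrix (Fin n) (Fin n) R) [Invertible φ] (m : ℕ) :
    Subgroup (Matrix (Ind n m) (Ind n m) R)ˣ :=
  Subgroup.closure (ElemSet φ m)

/-- The matrix of an automorphism of a smaller block of coordinates, embedded (via the
coordinate injection `u`) as an automorphism of everything, acting as the identity on the
remaining coordinates. -/
def embMat {J : Type*} [Fintype J] [DecidableEq J] {I : Type*} [Fintype I] [DecidableEq I]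
    (u : J → I) (A : Matrix J J R) : Matrix I I R :=
  (fun i j => ∑ a : J, ∑ b : J, if i = u a ∧ j = u b then A a b else 0) +
    fun i j => if i = j ∧ ¬(∃ a : J, u a = i) then 1 else 0

end DSERMat
/-! Over a local ring an isometry of the hyperbolic plane `h` is either `diag(a, a⁻¹)` or the
twisted swap `[[0, b], [b⁻¹, 0]]`: the isotropy conditions give `2ac = 2bd = 0` while
`ad + bc = 1`, and one of the two summands is a unit. Conjugation by `I_n ⊕ diag(a, a⁻¹)` rescales
the parameter of each generator (`E_α ↦ E_{aα}`, `E*_β ↦ E*_{a⁻¹β}`), and conjugation by the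
twisted swap exchanges the two families (`E_α ↦ E*_{b⁻¹α}`, `E*_β ↦ E_{bβ}`). So conjugation maps
the generating set of `EO_R(q, h)` into itself, hence the group into itself. -/

open Matrix

section Hyperbolic

variable {R : Type*} [CommRing R] [Invertible (2 : R)]

theorem eq_diag_or_antidiag_of_isometry_hyperbolic [IsLocalRing R]
    {g : Matrix (Fin 2) (Fin 2) R} (hg : gᵀ * !![(0:R), 1; 1, 0] * g = !![(0:R), 1; 1, 0]) :
    (∃ a d : R, a * d = 1 ∧ g = !![a, 0; 0, d]) ∨
      (∃ b c : R, b * c = 1 ∧ g = !![0, b; c, 0]) := by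
  obtain ⟨a, b, c, d, rfl⟩ : ∃ a b c d : R, g = !![a, b; c, d] := ⟨_, _, _, _, eta_fin_two g⟩
  have ht : !![a, b; c, d]ᵀ = !![a, c; b, d] := by ext i j; fin_cases i <;> fin_cases j <;> rfl
  rw [ht, mul_fin_two, mul_fin_two] at hg
  simp only [mul_zero, mul_one, zero_add, add_zero, EmbeddingLike.apply_eq_iff_eq, vecCons_inj,
    and_true] at hg
  obtain ⟨⟨h2ac, -⟩, hsum, h2bd⟩ := hg
  have h2 : IsUnit (2 : R) := isUnit_of_invertible 2
  have hac : a * c = 0 := h2.mul_right_eq_zero.mp (by linear_combination h2ac)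
  have hbd : b * d = 0 := h2.mul_right_eq_zero.mp (by linear_combination h2bd)
  rcases IsLocalRing.isUnit_or_isUnit_of_add_one (a := a * d) (b := b * c)
    (by linear_combination hsum) with hu | hu
  · obtain rfl : c = 0 := (isUnit_of_mul_isUnit_left hu).mul_right_eq_zero.mp hac
    obtain rfl : b = 0 := (isUnit_of_mul_isUnit_right hu).mul_left_eq_zero.mp hbd
    exact Or.inl ⟨a, d, by linear_combination hsum, rfl⟩
  · obtain rfl : a = 0 := (isUnit_of_mul_isUnit_right hu).mul_left_eq_zero.mp hac
    obtain rfl : d = 0 := (isUnit_of_mul_isUnit_left hu).mul_right_eq_zero.mp hbd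
    exact Or.inr ⟨b, c, by linear_combination hsum, rfl⟩

end Hyperbolic

theorem Subgroup.conj_mem_closure_of_conj_mem {M : Type*} [Group M] {S : Set M} (G : M)
    (hS : ∀ y ∈ S, G * y * G⁻¹ ∈ Subgroup.closure S) :
    ∀ x ∈ Subgroup.closure S, G * x * G⁻¹ ∈ Subgroup.closure S :=
  fun _ hx => (Subgroup.closure_le ((Subgroup.closure S).comap (MulAut.conj G).toMonoidHom)).2
    hS hx

namespace DSERMat

section HypBlock

variable {R : Type*} [CommRing R] {n m : ℕ}

def hypBlock (p q r s : R) : Matrix (Ind n m) (Ind n m) R :=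
  fromBlocks 1 0 0 (fromBlocks (p • 1) (q • 1) (r • 1) (s • 1))

theorem hypBlock_mul_hypBlock (p q r s p' q' r' s' : R) :
    (hypBlock p q r s : Matrix (Ind n m) (Ind n m) R) * hypBlock p' q' r' s' =
      hypBlock (p * p' + q * r') (p * q' + q * s') (r * p' + s * r') (r * q' + s * s') := by
  simp [hypBlock, fromBlocks_multiply, smul_smul, add_smul, mul_comm]

theorem hypBlock_one : (hypBlock 1 0 0 1 : Matrix (Ind n m) (Ind n m) R) = 1 := by
  simp [hypBlock, ← fromBlocks_one]

theorem embMat_apply {J I : Type*} [Fintype J] [DecidableEq J] [Fintype I] [DecidableEq I]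
    (u : J → I) (A : Matrix J J R) (i j : I) :
    embMat u A i j = (∑ a : J, ∑ b : J, if i = u a ∧ j = u b then A a b else 0) +
      (if i = j ∧ ¬∃ a : J, u a = i then 1 else 0) :=
  rfl

theorem embMat_hyperbolicPlane (p q r s : R) :
    embMat (![Sum.inr (Sum.inl 0), Sum.inr (Sum.inr 0)] : Fin 2 → Ind n 1) !![p, q; r, s] =
      hypBlock p q r s := by
  ext (i | i | i) (j | j | j) <;> rw [embMat_apply] <;>
    simp [hypBlock, Fin.sum_univ_two, one_apply, Fin.fin_one_eq_zero]

end HypBlock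

section Conjugation

variable {R : Type*} [CommRing R] [Invertible (2 : R)] {n m : ℕ}
  (φ : Matrix (Fin n) (Fin n) R) [Invertible φ] (α : Matrix (Fin m) (Fin n) R)

theorem hypBlock_diag_mul_Emat_mul {a d : R} (had : a * d = 1) :
    (hypBlock a 0 0 d : Matrix (Ind n m) (Ind n m) R) * Emat φ α * hypBlock d 0 0 a =
      Emat φ (a • α) := by
  simp [hypBlock, Emat, fromBlocks_multiply, fromBlocks_mul_fromRows, fromCols_mul_fromBlocks,
    Matrix.smul_mul, Matrix.mul_smul, smul_smul, had, mul_comm d a, transpose_smul]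
  congr 1
  ring

theorem hypBlock_diag_mul_EmatStar_mul {a d : R} (had : a * d = 1) :
    (hypBlock a 0 0 d : Matrix (Ind n m) (Ind n m) R) * EmatStar φ α * hypBlock d 0 0 a =
      EmatStar φ (d • α) := by
  simp [hypBlock, EmatStar, fromBlocks_multiply, fromBlocks_mul_fromRows, fromCols_mul_fromBlocks,
    Matrix.smul_mul, Matrix.mul_smul, smul_smul, had, mul_comm d a, transpose_smul]
  congr 1
  ring

theorem hypBlock_antidiag_mul_Emat_mul {b c : R} (hbc : b * c = 1) :
    (hypBlock 0 b c 0 : Matrix (Ind n m) (Ind n m) R) * Emat φ α * hypBlock 0 b c 0 =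
      EmatStar φ (c • α) := by
  simp [hypBlock, Emat, EmatStar, fromBlocks_multiply, fromBlocks_mul_fromRows,
    fromCols_mul_fromBlocks, Matrix.smul_mul, Matrix.mul_smul, smul_smul, hbc, mul_comm c b,
    transpose_smul]
  congr 1
  ring

theorem hypBlock_antidiag_mul_EmatStar_mul {b c : R} (hbc : b * c = 1) :
    (hypBlock 0 b c 0 : Matrix (Ind n m) (Ind n m) R) * EmatStar φ α * hypBlock 0 b c 0 =
      Emat φ (b • α) := by
  simp [hypBlock, Emat, EmatStar, fromBlocks_multiply, fromBlocks_mul_fromRows,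
    fromCols_mul_fromBlocks, Matrix.smul_mul, Matrix.mul_smul, smul_smul, hbc, mul_comm c b,
    transpose_smul]
  congr 1
  ring

end Conjugation

section Units

variable {R : Type*} [CommRing R] [Invertible (2 : R)] {n m : ℕ}
  {φ : Matrix (Fin n) (Fin n) R} [Invertible φ] {G y : (Matrix (Ind n m) (Ind n m) R)ˣ}

theorem conj_mem_ElemSet_of_diag {a d : R} (had : a * d = 1)
    (hG : (G : Matrix (Ind n m) (Ind n m) R) = hypBlock a 0 0 d) (hy : y ∈ ElemSet φ m) :
    G * y * G⁻¹ ∈ ElemSet φ m := by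
  have hGinv : ((G⁻¹ : _ˣ) : Matrix (Ind n m) (Ind n m) R) = hypBlock d 0 0 a :=
    Units.inv_eq_of_mul_eq_one_right <| by
      rw [hG, hypBlock_mul_hypBlock]; simpa [had, mul_comm d a] using hypBlock_one
  obtain ⟨α, hy | hy⟩ := hy
  · exact ⟨a • α, Or.inl <| by
      rw [Units.val_mul, Units.val_mul, hG, hy, hGinv, hypBlock_diag_mul_Emat_mul φ α had]⟩
  · exact ⟨d • α, Or.inr <| by
      rw [Units.val_mul, Units.val_mul, hG, hy, hGinv, hypBlock_diag_mul_EmatStar_mul φ α had]⟩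

theorem conj_mem_ElemSet_of_antidiag {b c : R} (hbc : b * c = 1)
    (hG : (G : Matrix (Ind n m) (Ind n m) R) = hypBlock 0 b c 0) (hy : y ∈ ElemSet φ m) :
    G * y * G⁻¹ ∈ ElemSet φ m := by
  have hGinv : ((G⁻¹ : _ˣ) : Matrix (Ind n m) (Ind n m) R) = hypBlock 0 b c 0 :=
    Units.inv_eq_of_mul_eq_one_right <| by
      rw [hG, hypBlock_mul_hypBlock]; simpa [hbc, mul_comm c b] using hypBlock_one
  obtain ⟨α, hy | hy⟩ := hy
  · exact ⟨c • α, Or.inr <| by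
      rw [Units.val_mul, Units.val_mul, hG, hy, hGinv, hypBlock_antidiag_mul_Emat_mul φ α hbc]⟩
  · exact ⟨b • α, Or.inl <| by
      rw [Units.val_mul, Units.val_mul, hG, hy, hGinv,
        hypBlock_antidiag_mul_EmatStar_mul φ α hbc]⟩

end Units

end DSERMat

open DSERMat Matrix in
theorem dser_O_h_normalizes_EO_local_m_one_general
    (R : Type*) [CommRing R] [IsLocalRing R] [Invertible (2 : R)]
    (n : ℕ)
    (φ : Matrix (Fin n) (Fin n) R) [Invertible φ]
    (g : Matrix (Fin 2) (Fin 2) R)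
    (hg : gᵀ * !![(0:R), 1; 1, 0] * g = !![(0:R), 1; 1, 0])
    (G : (Matrix (Ind n 1) (Ind n 1) R)ˣ)
    (hG : (G : Matrix (Ind n 1) (Ind n 1) R) =
      embMat (![Sum.inr (Sum.inl 0), Sum.inr (Sum.inr 0)] : Fin 2 → Ind n 1) g) :
    ∀ x ∈ EOGrp φ 1, G * x * G⁻¹ ∈ EOGrp φ 1 := by
  refine Subgroup.conj_mem_closure_of_conj_mem G fun y hy => Subgroup.subset_closure ?_
  rcases eq_diag_or_antidiag_of_isometry_hyperbolic hg with ⟨a, d, had, rfl⟩ | ⟨b, c, hbc, rfl⟩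
  · exact conj_mem_ElemSet_of_diag had (hG.trans (embMat_hyperbolicPlane _ _ _ _)) hy
  · exact conj_mem_ElemSet_of_antidiag hbc (hG.trans (embMat_hyperbolicPlane _ _ _ _)) hy

open DSERMat Matrix in
/-- Here a member of the embedded copy of `O_R(h)` is any unit `G` of the
matrix ring whose underlying matrix is `I_n ⊕ g` for some `g ∈ O_R(h)`, where `g` acts on
the two hyperbolic coordinates `(x₁, f₁)` and the identity on the `z`-block; every such
unit normalizes `EO_R(q, h)`. -/
theorem dser_O_h_normalizes_EO_local_m_one
    (R : Type*) [CommRing R] [IsLocalRing R] [Invertible (2 : R)]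
    (n : ℕ) (hn : 1 ≤ n)
    (φ : Matrix (Fin n) (Fin n) R) [Invertible φ] (hφ : φ.IsSymm)
    (g : Matrix (Fin 2) (Fin 2) R)
    (hg : gᵀ * !![(0:R), 1; 1, 0] * g = !![(0:R), 1; 1, 0])
    (G : (Matrix (Ind n 1) (Ind n 1) R)ˣ)
    (hG : (G : Matrix (Ind n 1) (Ind n 1) R) =
      embMat (![Sum.inr (Sum.inl 0), Sum.inr (Sum.inr 0)] : Fin 2 → Ind n 1) g) :
    ∀ x ∈ EOGrp φ 1, G * x * G⁻¹ ∈ EOGrp φ 1 :=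
  dser_O_h_normalizes_EO_local_m_one_general R n φ g hg G hG
end

section
/- Let R be a commutative local ring in which 2 is invertible and take m = 1. Then the DSER elementary orthogonal group EO_R(q, h) is a normal subgroup of O_R(q ⊥ h). -/
open Matrix

namespace Matrix

variable {R : Type*} [CommRing R] {I : Type*} [Fintype I] {S : Matrix I I R}

theorem IsSymm.dotProduct_mulVec_comm (hS : S.IsSymm) (a b : I → R) :
    a ⬝ᵥ S *ᵥ b = b ⬝ᵥ S *ᵥ a := by
  rw [dotProduct_mulVec, ← mulVec_transpose, hS.eq, dotProduct_comm]

variable (S) in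
structure IsHyperbolicPair (e f : I → R) : Prop where
  isotropic_left : e ⬝ᵥ S *ᵥ e = 0
  isotropic_right : f ⬝ᵥ S *ᵥ f = 0
  dotProduct_mulVec_eq_one : e ⬝ᵥ S *ᵥ f = 1

theorem IsHyperbolicPair.symm (hS : S.IsSymm) {e f : I → R} (h : IsHyperbolicPair S e f) :
    IsHyperbolicPair S f e :=
  ⟨h.isotropic_right, h.isotropic_left,
    by rw [hS.dotProduct_mulVec_comm, h.dotProduct_mulVec_eq_one]⟩

variable [DecidableEq I]

theorem transpose_mul_mul_eq_self_iff {M : Matrix I I R} :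
    Mᵀ * S * M = S ↔ ∀ a b, (M *ᵥ a) ⬝ᵥ S *ᵥ (M *ᵥ b) = a ⬝ᵥ S *ᵥ b := by
  have key (a b : I → R) : (M *ᵥ a) ⬝ᵥ S *ᵥ (M *ᵥ b) = a ⬝ᵥ (Mᵀ * S * M) *ᵥ b := by
    rw [← mulVec_mulVec, ← mulVec_mulVec, dotProduct_mulVec a, vecMul_transpose]
  refine ⟨fun h a b => by rw [key, h], fun h => ?_⟩
  ext i j
  have := h (Pi.single i 1) (Pi.single j 1)
  rwa [key, mulVec_single_one, mulVec_single_one, single_one_dotProduct, single_one_dotProduct,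
    col_apply, col_apply] at this

variable (S) in
def isometryGroup : Subgroup (Matrix I I R)ˣ where
  carrier := {g | (g : Matrix I I R)ᵀ * S * g = S}
  one_mem' := by simp
  mul_mem' {g h} hg hh := by
    simp only [Set.mem_ofPred_eq, transpose_mul_mul_eq_self_iff, Units.val_mul] at *
    intro a b
    rw [← mulVec_mulVec, ← mulVec_mulVec, hg, hh]
  inv_mem' {g} hg := by
    simp only [Set.mem_ofPred_eq, transpose_mul_mul_eq_self_iff] at *
    intro a b
    simpa only [mulVec_mulVec, ← Units.val_mul, mul_inv_cancel, Units.val_one, one_mulVec]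
      using (hg (↑g⁻¹ *ᵥ a) (↑g⁻¹ *ᵥ b)).symm

variable [Invertible (2 : R)]

variable (S) in
def eichlerTransvection (u w : I → R) : Matrix I I R :=
  1 + vecMulVec w (u ᵥ* S) - vecMulVec u (w ᵥ* S)
    - (⅟2 * (w ⬝ᵥ S *ᵥ w)) • vecMulVec u (u ᵥ* S)

theorem eichlerTransvection_mulVec (u w x : I → R) :
    eichlerTransvection S u w *ᵥ x = x + (u ⬝ᵥ S *ᵥ x) • w - (w ⬝ᵥ S *ᵥ x) • u
      - (⅟2 * (w ⬝ᵥ S *ᵥ w) * (u ⬝ᵥ S *ᵥ x)) • u := by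
  simp only [eichlerTransvection, add_mulVec, sub_mulVec, one_mulVec, smul_mulVec,
    vecMulVec_mulVec, op_smul_eq_smul, dotProduct_mulVec, smul_smul]

theorem eichlerTransvection_zero (u : I → R) : eichlerTransvection S u 0 = 1 := by
  simp [eichlerTransvection]

theorem eichlerTransvection_mul_eichlerTransvection (hS : S.IsSymm) {u w₁ w₂ : I → R}
    (hu : u ⬝ᵥ S *ᵥ u = 0) (h₁ : u ⬝ᵥ S *ᵥ w₁ = 0) (h₂ : u ⬝ᵥ S *ᵥ w₂ = 0) :
    eichlerTransvection S u w₁ * eichlerTransvection S u w₂ =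
      eichlerTransvection S u (w₁ + w₂) := by
  refine ext_iff_mulVec.mpr fun x => ?_
  rw [← mulVec_mulVec]
  simp only [eichlerTransvection_mulVec, mulVec_add, mulVec_sub, mulVec_smul, dotProduct_add,
    add_dotProduct, hu, h₁, h₂, hS.dotProduct_mulVec_comm w₁ u,
    hS.dotProduct_mulVec_comm w₂ w₁]
  linear_combination (norm := module)
    ((u ⬝ᵥ S *ᵥ x * w₁ ⬝ᵥ S *ᵥ w₂) * invOf_mul_self (2 : R)) • u

theorem eichlerTransvection_transpose_mul_mul (hS : S.IsSymm) {u w : I → R}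
    (hu : u ⬝ᵥ S *ᵥ u = 0) (huw : u ⬝ᵥ S *ᵥ w = 0) :
    (eichlerTransvection S u w)ᵀ * S * eichlerTransvection S u w = S := by
  refine transpose_mul_mul_eq_self_iff.mpr fun a b => ?_
  simp only [eichlerTransvection_mulVec, mulVec_add, mulVec_sub, mulVec_smul, dotProduct_add,
    add_dotProduct, sub_dotProduct, dotProduct_sub, dotProduct_smul, smul_dotProduct,
    smul_eq_mul, hu, huw, hS.dotProduct_mulVec_comm w u, hS.dotProduct_mulVec_comm a u,
    hS.dotProduct_mulVec_comm a w]
  linear_combination (-(u ⬝ᵥ S *ᵥ a * u ⬝ᵥ S *ᵥ b * w ⬝ᵥ S *ᵥ w)) * invOf_mul_self (2 : R)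

theorem eichlerTransvection_smul_left (r : R) (u w : I → R) :
    eichlerTransvection S (r • u) w = eichlerTransvection S u (r • w) := by
  refine ext_iff_mulVec.mpr fun x => ?_
  simp only [eichlerTransvection_mulVec, mulVec_smul, dotProduct_smul, smul_dotProduct,
    smul_eq_mul]
  module

theorem mul_eichlerTransvection {g : Matrix I I R} (hg : gᵀ * S * g = S) (u w : I → R) :
    g * eichlerTransvection S u w = eichlerTransvection S (g *ᵥ u) (g *ᵥ w) * g := by
  refine ext_iff_mulVec.mpr fun x => ?_
  simp only [← mulVec_mulVec, eichlerTransvection_mulVec, mulVec_add, mulVec_sub, mulVec_smul,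
    transpose_mul_mul_eq_self_iff.mp hg]

theorem eichlerTransvection_mulVec_of_isHyperbolicPair (hS : S.IsSymm) {e f v : I → R}
    (h : IsHyperbolicPair S e f) (hv : v ⬝ᵥ S *ᵥ v = 0) (hev : e ⬝ᵥ S *ᵥ v = 1) :
    eichlerTransvection S e (v - f - (f ⬝ᵥ S *ᵥ v) • e) *ᵥ f = v := by
  have hfe := (h.symm hS).dotProduct_mulVec_eq_one
  simp only [eichlerTransvection_mulVec, mulVec_sub, mulVec_smul, dotProduct_sub,
    sub_dotProduct, dotProduct_smul, smul_dotProduct, smul_eq_mul, h.dotProduct_mulVec_eq_one,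
    h.isotropic_left, h.isotropic_right, hfe, hv, hev, hS.dotProduct_mulVec_comm v f,
    hS.dotProduct_mulVec_comm v e]
  linear_combination (norm := module) ((f ⬝ᵥ S *ᵥ v) * invOf_mul_self (2 : R)) • e

variable (S) in
def eichlerTransvectionsAt (u : I → R) : Set (Matrix I I R)ˣ :=
  {g | ∃ w, u ⬝ᵥ S *ᵥ w = 0 ∧ (g : Matrix I I R) = eichlerTransvection S u w}

theorem exists_mem_eichlerTransvectionsAt (hS : S.IsSymm) {u w : I → R}
    (hu : u ⬝ᵥ S *ᵥ u = 0) (huw : u ⬝ᵥ S *ᵥ w = 0) :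
    ∃ g ∈ eichlerTransvectionsAt S u, (g : Matrix I I R) = eichlerTransvection S u w := by
  have huw' : u ⬝ᵥ S *ᵥ (-w) = 0 := by rw [mulVec_neg, dotProduct_neg, huw, neg_zero]
  refine ⟨⟨eichlerTransvection S u w, eichlerTransvection S u (-w), ?_, ?_⟩, ⟨w, huw, rfl⟩, rfl⟩
  · rw [eichlerTransvection_mul_eichlerTransvection hS hu huw huw', add_neg_cancel,
      eichlerTransvection_zero]
  · rw [eichlerTransvection_mul_eichlerTransvection hS hu huw' huw, neg_add_cancel,
      eichlerTransvection_zero]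

theorem eichlerTransvectionsAt_subset_isometryGroup (hS : S.IsSymm) {u : I → R}
    (hu : u ⬝ᵥ S *ᵥ u = 0) : eichlerTransvectionsAt S u ⊆ isometryGroup S := by
  rintro g ⟨w, huw, hg⟩
  change (g : Matrix I I R)ᵀ * S * g = S
  rw [hg, eichlerTransvection_transpose_mul_mul hS hu huw]

theorem conj_mem_eichlerTransvectionsAt {g : (Matrix I I R)ˣ} (hg : g ∈ isometryGroup S)
    {u : I → R} {s : (Matrix I I R)ˣ} (hs : s ∈ eichlerTransvectionsAt S u) :
    g * s * g⁻¹ ∈ eichlerTransvectionsAt S (↑g *ᵥ u) := by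
  obtain ⟨w, huw, hs⟩ := hs
  refine ⟨↑g *ᵥ w, by rwa [transpose_mul_mul_eq_self_iff.mp hg], ?_⟩
  rw [Units.val_mul, Units.val_mul, hs, mul_eichlerTransvection hg, Matrix.mul_assoc,
    ← Units.val_mul, mul_inv_cancel, Units.val_one, Matrix.mul_one]

theorem eichlerTransvectionsAt_smul_subset (r : R) (u : I → R) :
    eichlerTransvectionsAt S (r • u) ⊆ eichlerTransvectionsAt S u := by
  rintro g ⟨w, huw, hg⟩
  refine ⟨r • w, ?_, hg.trans (eichlerTransvection_smul_left r u w)⟩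
  rwa [mulVec_smul, dotProduct_smul, ← smul_dotProduct]

variable {H : Subgroup (Matrix I I R)ˣ}

theorem eichlerTransvectionsAt_subset_of_isUnit (hS : S.IsSymm) {e f : I → R}
    (h : IsHyperbolicPair S e f) (he : eichlerTransvectionsAt S e ⊆ H)
    (hf : eichlerTransvectionsAt S f ⊆ H) {u : I → R} (hu : u ⬝ᵥ S *ᵥ u = 0)
    (hunit : IsUnit (e ⬝ᵥ S *ᵥ u)) : eichlerTransvectionsAt S u ⊆ H := by
  obtain ⟨t, ht⟩ := hunit
  set v := (↑t⁻¹ : R) • u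
  have huv : u = (t : R) • v := by simp [v, smul_smul]
  have hv : v ⬝ᵥ S *ᵥ v = 0 := by simp [v, mulVec_smul, hu]
  have hev : e ⬝ᵥ S *ᵥ v = 1 := by simp [v, mulVec_smul, ← ht]
  obtain ⟨E, hEe, hE⟩ := exists_mem_eichlerTransvectionsAt hS h.isotropic_left
    (w := v - f - (f ⬝ᵥ S *ᵥ v) • e) (by
      simp [mulVec_sub, mulVec_smul, dotProduct_sub, hev, h.dotProduct_mulVec_eq_one,
        h.isotropic_left])
  have hEO := eichlerTransvectionsAt_subset_isometryGroup hS h.isotropic_left hEe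
  have hEf : (↑E⁻¹ : Matrix I I R) *ᵥ v = f := by
    rw [← eichlerTransvection_mulVec_of_isHyperbolicPair hS h hv hev, ← hE, mulVec_mulVec,
      ← Units.val_mul, inv_mul_cancel, Units.val_one, one_mulVec]
  intro s hs
  have hs' : E⁻¹ * s * E⁻¹⁻¹ ∈ H := by
    refine hf ?_
    rw [← hEf]
    exact conj_mem_eichlerTransvectionsAt (inv_mem hEO)
      (eichlerTransvectionsAt_smul_subset _ _ (huv ▸ hs))
  have : s = E * (E⁻¹ * s * E⁻¹⁻¹) * E⁻¹ := by group
  rw [this]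
  exact mul_mem (mul_mem (he hEe) hs') (inv_mem (he hEe))

theorem eichlerTransvectionsAt_subset [IsLocalRing R] (hS : S.IsSymm) {e f : I → R}
    (h : IsHyperbolicPair S e f) (he : eichlerTransvectionsAt S e ⊆ H)
    (hf : eichlerTransvectionsAt S f ⊆ H) {u y : I → R} (hu : u ⬝ᵥ S *ᵥ u = 0)
    (hyu : y ⬝ᵥ S *ᵥ u = 1) : eichlerTransvectionsAt S u ⊆ H := by
  by_cases heu : IsUnit (e ⬝ᵥ S *ᵥ u)
  · exact eichlerTransvectionsAt_subset_of_isUnit hS h he hf hu heu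
  by_cases hfu : IsUnit (f ⬝ᵥ S *ᵥ u)
  · exact eichlerTransvectionsAt_subset_of_isUnit hS (h.symm hS) hf he hu hfu
  -- `w ⊥ f`, and `⟨w, u⟩` is a unit because `⟨e, u⟩` is not.
  set w := y - (f ⬝ᵥ S *ᵥ y) • e
  have hfw : f ⬝ᵥ S *ᵥ w = 0 := by
    simp [w, mulVec_sub, mulVec_smul, dotProduct_sub, (h.symm hS).dotProduct_mulVec_eq_one]
  have hwu : w ⬝ᵥ S *ᵥ u = 1 - (f ⬝ᵥ S *ᵥ y) * (e ⬝ᵥ S *ᵥ u) := by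
    simp [w, sub_dotProduct, hyu]
  obtain ⟨ε, hεf, hε⟩ := exists_mem_eichlerTransvectionsAt hS h.isotropic_right hfw
  have hεO := eichlerTransvectionsAt_subset_isometryGroup hS h.isotropic_right hεf
  have hunit : IsUnit (e ⬝ᵥ S *ᵥ (↑ε *ᵥ u)) := by
    have key : e ⬝ᵥ S *ᵥ (↑ε *ᵥ u) = -(1 - ((e ⬝ᵥ S *ᵥ u) * (1 + f ⬝ᵥ S *ᵥ y)
        + (f ⬝ᵥ S *ᵥ u) * (e ⬝ᵥ S *ᵥ w - ⅟2 * (w ⬝ᵥ S *ᵥ w)))) := by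
      simp only [hε, eichlerTransvection_mulVec, mulVec_add, mulVec_sub, mulVec_smul,
        dotProduct_add, dotProduct_sub, dotProduct_smul, smul_eq_mul, h.dotProduct_mulVec_eq_one,
        hwu]
      ring
    have hm (x : R) (hx : ¬IsUnit x) : x ∈ IsLocalRing.maximalIdeal R := hx
    rw [key]
    exact (IsLocalRing.isUnit_one_sub_self_of_mem_nonunits _ (Ideal.add_mem _
      (Ideal.mul_mem_right _ _ (hm _ heu)) (Ideal.mul_mem_right _ _ (hm _ hfu)))).neg
  intro s hs
  have hs' : ε * s * ε⁻¹ ∈ H :=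
    eichlerTransvectionsAt_subset_of_isUnit hS h he hf
      (by rwa [transpose_mul_mul_eq_self_iff.mp hεO]) hunit
      (conj_mem_eichlerTransvectionsAt hεO hs)
  have : s = ε⁻¹ * (ε * s * ε⁻¹) * ε := by group
  rw [this]
  exact mul_mem (mul_mem (inv_mem (hf hεf)) hs') (hf hεf)

theorem closure_eichlerTransvectionsAt_le_isometryGroup (hS : S.IsSymm) {e f : I → R}
    (h : IsHyperbolicPair S e f) :
    Subgroup.closure (eichlerTransvectionsAt S e ∪ eichlerTransvectionsAt S f) ≤
      isometryGroup S :=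
  (Subgroup.closure_le _).mpr <| Set.union_subset
    (eichlerTransvectionsAt_subset_isometryGroup hS h.isotropic_left)
    (eichlerTransvectionsAt_subset_isometryGroup hS h.isotropic_right)

theorem conj_mem_closure_eichlerTransvectionsAt [IsLocalRing R] (hS : S.IsSymm) {e f : I → R}
    (h : IsHyperbolicPair S e f) {g : (Matrix I I R)ˣ} (hg : g ∈ isometryGroup S)
    {s : (Matrix I I R)ˣ}
    (hs : s ∈ Subgroup.closure (eichlerTransvectionsAt S e ∪ eichlerTransvectionsAt S f)) :
    g * s * g⁻¹ ∈ Subgroup.closure (eichlerTransvectionsAt S e ∪ eichlerTransvectionsAt S f) := by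
  set H := Subgroup.closure (eichlerTransvectionsAt S e ∪ eichlerTransvectionsAt S f)
  have he : eichlerTransvectionsAt S e ⊆ H := fun _ hx => Subgroup.subset_closure (Or.inl hx)
  have hf : eichlerTransvectionsAt S f ⊆ H := fun _ hx => Subgroup.subset_closure (Or.inr hx)
  have hgS := transpose_mul_mul_eq_self_iff.mp hg
  suffices H ≤ H.comap (MulAut.conj g).toMonoidHom from this hs
  refine (Subgroup.closure_le _).mpr (Set.union_subset ?_ ?_) <;> intro t ht
  · refine eichlerTransvectionsAt_subset hS h he hf (y := ↑g *ᵥ f) ?_ ?_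
      (conj_mem_eichlerTransvectionsAt hg ht)
    · rw [hgS, h.isotropic_left]
    · rw [hgS, hS.dotProduct_mulVec_comm, h.dotProduct_mulVec_eq_one]
  · refine eichlerTransvectionsAt_subset hS h he hf (y := ↑g *ᵥ e) ?_ ?_
      (conj_mem_eichlerTransvectionsAt hg ht)
    · rw [hgS, h.isotropic_right]
    · rw [hgS, h.dotProduct_mulVec_eq_one]

end Matrix

namespace DSERMat

variable {R : Type*} [CommRing R] {n : ℕ}

theorem Phi_isSymm {φ : Matrix (Fin n) (Fin n) R} (hφ : φ.IsSymm) (m : ℕ) :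
    (Phi φ m).IsSymm := by
  simp [Matrix.IsSymm, Phi, fromBlocks_transpose, hφ.eq]

theorem OGrp_eq_isometryGroup (φ : Matrix (Fin n) (Fin n) R) (m : ℕ) :
    OGrp φ m = isometryGroup (Phi φ m) :=
  rfl

def xVec (n : ℕ) : Ind n 1 → R := Pi.single (Sum.inr (Sum.inl 0)) 1

def fVec (n : ℕ) : Ind n 1 → R := Pi.single (Sum.inr (Sum.inr 0)) 1

variable (φ : Matrix (Fin n) (Fin n) R)

theorem Phi_mulVec (v : Ind n 1 → R) :
    Phi φ 1 *ᵥ v = Sum.elim (φ *ᵥ (v ∘ Sum.inl))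
      (Sum.elim (fun _ => v (Sum.inr (Sum.inr 0))) (fun _ => v (Sum.inr (Sum.inl 0)))) := by
  ext (i | i | i) <;> simp [Phi, fromBlocks_mulVec, Fin.fin_one_eq_zero]

theorem Phi_mulVec_xVec : Phi φ 1 *ᵥ xVec n = fVec n := by
  rw [Phi_mulVec]
  ext (i | i | i) <;>
    simp [xVec, fVec, Fin.fin_one_eq_zero, Function.comp_def, mulVec, dotProduct]

theorem Phi_mulVec_fVec : Phi φ 1 *ᵥ fVec n = xVec n := by
  rw [Phi_mulVec]
  ext (i | i | i) <;>
    simp [xVec, fVec, Fin.fin_one_eq_zero, Function.comp_def, mulVec, dotProduct]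

theorem dotProduct_Phi_mulVec (v : Ind n 1 → R) :
    v ⬝ᵥ Phi φ 1 *ᵥ v = (v ∘ Sum.inl) ⬝ᵥ φ *ᵥ (v ∘ Sum.inl)
      + 2 * v (Sum.inr (Sum.inl 0)) * v (Sum.inr (Sum.inr 0)) := by
  simp only [dotProduct, Phi_mulVec, Fintype.sum_sum_type, Sum.elim_inl, Sum.elim_inr,
    Finset.univ_unique, Fin.default_eq_zero, Finset.sum_singleton, Function.comp_apply,
    add_right_inj]
  ring

theorem isHyperbolicPair_xVec_fVec : IsHyperbolicPair (Phi φ 1) (xVec n) (fVec n) := by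
  refine ⟨?_, ?_, ?_⟩
  · rw [Phi_mulVec_xVec]; simp [xVec, fVec]
  · rw [Phi_mulVec_fVec]; simp [xVec, fVec]
  · rw [Phi_mulVec_fVec]; simp [xVec]

variable {φ} [Invertible φ]

theorem invOf_mul_transpose_replicateRow (c : Fin n → R) :
    ⅟φ * (replicateRow (Fin 1) (-(φ *ᵥ c)))ᵀ = replicateCol (Fin 1) (-c) := by
  rw [transpose_replicateRow, ← replicateCol_mulVec, mulVec_neg, mulVec_mulVec, invOf_mul_self,
    one_mulVec]

variable [Invertible (2 : R)]

theorem eichlerTransvection_xVec (hφ : φ.IsSymm) {w : Ind n 1 → R}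
    (hw : w (Sum.inr (Sum.inr 0)) = 0) :
    eichlerTransvection (Phi φ 1) (xVec n) w =
      Emat φ (replicateRow (Fin 1) (-(φ *ᵥ (w ∘ Sum.inl)))) := by
  have hvecMul (v : Ind n 1 → R) : v ᵥ* Phi φ 1 = Phi φ 1 *ᵥ v := by
    rw [← mulVec_transpose, (Phi_isSymm hφ 1).eq]
  rw [eichlerTransvection, Emat, hvecMul, hvecMul, dotProduct_Phi_mulVec, hw,
    invOf_mul_transpose_replicateRow, Phi_mulVec_xVec, Phi_mulVec]
  ext (i | i | i) (j | j | j) <;>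
    simp [xVec, fVec, fromBlocks, vecMulVec_apply, Fin.fin_one_eq_zero, one_apply, hw,
      dotProduct_comm]

theorem eichlerTransvection_fVec (hφ : φ.IsSymm) {w : Ind n 1 → R}
    (hw : w (Sum.inr (Sum.inl 0)) = 0) :
    eichlerTransvection (Phi φ 1) (fVec n) w =
      EmatStar φ (replicateRow (Fin 1) (-(φ *ᵥ (w ∘ Sum.inl)))) := by
  have hvecMul (v : Ind n 1 → R) : v ᵥ* Phi φ 1 = Phi φ 1 *ᵥ v := by
    rw [← mulVec_transpose, (Phi_isSymm hφ 1).eq]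
  rw [eichlerTransvection, EmatStar, hvecMul, hvecMul, dotProduct_Phi_mulVec, hw,
    invOf_mul_transpose_replicateRow, Phi_mulVec_fVec, Phi_mulVec]
  ext (i | i | i) (j | j | j) <;>
    simp [xVec, fVec, fromBlocks, vecMulVec_apply, Fin.fin_one_eq_zero, one_apply, hw,
      dotProduct_comm]

theorem ElemSet_eq (hφ : φ.IsSymm) :
    ElemSet φ 1 =
      eichlerTransvectionsAt (Phi φ 1) (xVec n) ∪ eichlerTransvectionsAt (Phi φ 1) (fVec n) := by
  have hx (w : Ind n 1 → R) : xVec n ⬝ᵥ Phi φ 1 *ᵥ w = w (Sum.inr (Sum.inr 0)) := by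
    simp [xVec, Phi_mulVec]
  have hf (w : Ind n 1 → R) : fVec n ⬝ᵥ Phi φ 1 *ᵥ w = w (Sum.inr (Sum.inl 0)) := by
    simp [fVec, Phi_mulVec]
  have hα (α : Matrix (Fin 1) (Fin n) R) :
      replicateRow (Fin 1) (-(φ *ᵥ -(⅟φ *ᵥ α 0))) = α := by
    rw [mulVec_neg, neg_neg, mulVec_mulVec, mul_invOf_self, one_mulVec]
    ext i j
    rw [Fin.fin_one_eq_zero i, replicateRow_apply]
  ext g
  constructor
  · rintro ⟨α, hg | hg⟩
    · refine Or.inl ⟨Sum.elim (-(⅟φ *ᵥ α 0)) 0, by simp [hx], ?_⟩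
      rw [hg, eichlerTransvection_xVec hφ rfl, Sum.elim_comp_inl, hα]
    · refine Or.inr ⟨Sum.elim (-(⅟φ *ᵥ α 0)) 0, by simp [hf], ?_⟩
      rw [hg, eichlerTransvection_fVec hφ rfl, Sum.elim_comp_inl, hα]
  · rintro (⟨w, hw, hg⟩ | ⟨w, hw, hg⟩)
    · exact ⟨_, Or.inl (hg.trans (eichlerTransvection_xVec hφ ((hx w).symm.trans hw)))⟩
    · exact ⟨_, Or.inr (hg.trans (eichlerTransvection_fVec hφ ((hf w).symm.trans hw)))⟩

end DSERMat

open DSERMat in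
theorem dser_EO_normal_local_m_one_general
    (R : Type*) [CommRing R] [IsLocalRing R] [Invertible (2 : R)]
    (n : ℕ)
    (φ : Matrix (Fin n) (Fin n) R) [Invertible φ] (hφ : φ.IsSymm) :
    EOGrp φ 1 ≤ OGrp φ 1 ∧ ((EOGrp φ 1).subgroupOf (OGrp φ 1)).Normal := by
  have hS := Phi_isSymm hφ 1
  have hpair := isHyperbolicPair_xVec_fVec φ
  have hEO : EOGrp φ 1 = Subgroup.closure
      (eichlerTransvectionsAt (Phi φ 1) (xVec n) ∪ eichlerTransvectionsAt (Phi φ 1) (fVec n)) :=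
    congrArg Subgroup.closure (ElemSet_eq hφ)
  have hle : EOGrp φ 1 ≤ OGrp φ 1 := by
    rw [hEO, OGrp_eq_isometryGroup]
    exact closure_eichlerTransvectionsAt_le_isometryGroup hS hpair
  refine ⟨hle, (Subgroup.normal_subgroupOf_iff hle).mpr fun s g hs hg => ?_⟩
  rw [hEO] at hs ⊢
  exact conj_mem_closure_eichlerTransvectionsAt hS hpair hg hs

open DSERMat in
/-- Over a commutative local ring with 2 invertible, `EO_R(q, h)` is a normal
subgroup of `O_R(q ⊥ h)` (case m = 1). -/
theorem dser_EO_normal_local_m_one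
    (R : Type*) [CommRing R] [IsLocalRing R] [Invertible (2 : R)]
    (n : ℕ) (hn : 1 ≤ n)
    (φ : Matrix (Fin n) (Fin n) R) [Invertible φ] (hφ : φ.IsSymm) :
    EOGrp φ 1 ≤ OGrp φ 1 ∧ ((EOGrp φ 1).subgroupOf (OGrp φ 1)).Normal :=
  dser_EO_normal_local_m_one_general R n φ hφ
end

section
/- Let R be a commutative ring in which 2 is invertible, let u ∈ R be a unit, and let ι(u) ∈ O_R(q ⊥ h^m) be the matrix acting as the identity on all coordinates except x_m ↦ u·x_m and f_m ↦ u⁻¹·f_m. Then for all m×n matrices α, β over R one has ι(u) E_α ι(u)⁻¹ = E_{α'} and ι(u) E*_β ι(u)⁻¹ = E*_{β'}, where α' is α with its m-th row multiplied by u and β' is β with its m-th row multiplied by u⁻¹; in particular the subgroup { ι(u) : u ∈ R a unit } normalizes EO_R(q, h^m). -/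
namespace DSERMat

variable {R : Type*} [CommRing R]

/-- The diagonal of the matrix ι(u): identity everywhere except `u` at the coordinate
`x_m` and `u⁻¹` at the coordinate `f_m`. -/
def iotaDiag (n m : ℕ) (u : Rˣ) : Ind n m → R :=
  Sum.elim (fun _ => 1)
    (Sum.elim (fun j => if (j : ℕ) = m - 1 then (u : R) else 1)
              (fun j => if (j : ℕ) = m - 1 then ((u⁻¹ : Rˣ) : R) else 1))

/-- The matrix obtained from `α` by multiplying its m-th (i.e. last) row by `c`. -/
def lastRowScale {n m : ℕ} (c : R) (α : Matrix (Fin m) (Fin n) R) : Matrix (Fin m) (Fin n) R :=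
  fun i j => (if (i : ℕ) = m - 1 then c else 1) * α i j

end DSERMat

/-!
`ι(u)` is the image of `diag(1, …, 1, u)` under the hyperbolic embedding
`A ↦ diag(I_n, A, (A⁻¹)ᵀ)` of `GL_m(R)`. Conjugation by `diag(I_n, A, (A⁻¹)ᵀ)` sends `E_α` to
`E_{Aα}` and `E*_β` to `E*_{(A⁻¹)ᵀβ}`, because `(Aα)* = α* Aᵀ`; so it permutes the generators of
`EO_R(q, h^m)` and hence normalizes it.
-/

namespace DSERMat

open Matrix

variable {R : Type*} [CommRing R] {n m : ℕ}

def hyperbolicMat (n : ℕ) (A B : Matrix (Fin m) (Fin m) R) : Matrix (Ind n m) (Ind n m) R :=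
  fromBlocks 1 0 0 (fromBlocks A 0 0 Bᵀ)

theorem hyperbolicMat_mul_hyperbolicMat {A B : Matrix (Fin m) (Fin m) R} (hAB : A * B = 1) :
    hyperbolicMat n A B * hyperbolicMat n B A = 1 := by
  simp [hyperbolicMat, fromBlocks_multiply, ← transpose_mul, hAB, fromBlocks_one]

section Conj

variable [Invertible (2 : R)] (φ : Matrix (Fin n) (Fin n) R) [Invertible φ]
  {A B : Matrix (Fin m) (Fin m) R}

theorem hyperbolicMat_mul_Emat_mul (hAB : A * B = 1) (α : Matrix (Fin m) (Fin n) R) :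
    hyperbolicMat n A B * Emat φ α * hyperbolicMat n B A = Emat φ (A * α) := by
  have hBA : Bᵀ * Aᵀ = 1 := by rw [← transpose_mul, hAB, transpose_one]
  simp only [hyperbolicMat, Emat, fromBlocks_multiply, fromCols_mul_fromBlocks,
    fromBlocks_mul_fromRows, Matrix.mul_one, Matrix.one_mul, Matrix.zero_mul, Matrix.mul_zero,
    add_zero, zero_add, smul_zero, neg_zero, transpose_mul, Matrix.neg_mul, Matrix.mul_neg,
    Matrix.smul_mul, Matrix.mul_smul, Matrix.mul_assoc, hAB, hBA]

theorem hyperbolicMat_mul_EmatStar_mul (hAB : A * B = 1) (β : Matrix (Fin m) (Fin n) R) :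
    hyperbolicMat n A B * EmatStar φ β * hyperbolicMat n B A = EmatStar φ (Bᵀ * β) := by
  have hBA : Bᵀ * Aᵀ = 1 := by rw [← transpose_mul, hAB, transpose_one]
  simp only [hyperbolicMat, EmatStar, fromBlocks_multiply, fromCols_mul_fromBlocks,
    fromBlocks_mul_fromRows, Matrix.mul_one, Matrix.one_mul, Matrix.zero_mul, Matrix.mul_zero,
    add_zero, zero_add, smul_zero, neg_zero, transpose_mul, transpose_transpose, Matrix.neg_mul,
    Matrix.mul_neg, Matrix.smul_mul, Matrix.mul_smul, Matrix.mul_assoc, hAB, hBA]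

theorem conj_mem_EOGrp_of_val_eq_hyperbolicMat (hAB : A * B = 1)
    {G : (Matrix (Ind n m) (Ind n m) R)ˣ} (hG : (G : Matrix _ _ R) = hyperbolicMat n A B)
    {x : (Matrix (Ind n m) (Ind n m) R)ˣ} (hx : x ∈ EOGrp φ m) : G * x * G⁻¹ ∈ EOGrp φ m := by
  have hGinv : (↑G⁻¹ : Matrix _ _ R) = hyperbolicMat n B A :=
    Units.inv_eq_of_mul_eq_one_right (hG ▸ hyperbolicMat_mul_hyperbolicMat hAB)
  have hgen : MulAut.conj G '' ElemSet φ m ⊆ ElemSet φ m := by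
    rintro _ ⟨g, ⟨α, hα | hα⟩, rfl⟩
    · exact ⟨A * α, Or.inl <| by
        simp [hα, hG, hGinv, hyperbolicMat_mul_Emat_mul φ hAB]⟩
    · exact ⟨Bᵀ * α, Or.inr <| by
        simp [hα, hG, hGinv, hyperbolicMat_mul_EmatStar_mul φ hAB]⟩
  have hmap : (EOGrp φ m).map (MulAut.conj G).toMonoidHom ≤ EOGrp φ m := by
    rw [EOGrp, MonoidHom.map_closure]
    exact Subgroup.closure_mono hgen
  exact hmap ⟨x, hx, rfl⟩

end Conj

def lastRowDiag (m : ℕ) (c : R) : Fin m → R := fun j => if (j : ℕ) = m - 1 then c else 1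

theorem lastRowScale_eq_diagonal_mul (c : R) (α : Matrix (Fin m) (Fin n) R) :
    lastRowScale c α = diagonal (lastRowDiag m c) * α := by
  ext i j
  simp [lastRowScale, lastRowDiag, diagonal_mul]

theorem diagonal_lastRowDiag_mul {c c' : R} (h : c * c' = 1) :
    diagonal (lastRowDiag m c) * diagonal (lastRowDiag m c') = 1 := by
  rw [diagonal_mul_diagonal, ← diagonal_one]
  congr 1
  ext j
  by_cases hj : (j : ℕ) = m - 1 <;> simp [lastRowDiag, hj, h]

theorem diagonal_iotaDiag (u : Rˣ) :
    diagonal (iotaDiag n m u) =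
      hyperbolicMat n (diagonal (lastRowDiag m (u : R)))
        (diagonal (lastRowDiag m ((u⁻¹ : Rˣ) : R))) := by
  rw [hyperbolicMat, diagonal_transpose, ← diagonal_one, fromBlocks_diagonal,
    fromBlocks_diagonal]
  rfl

end DSERMat

open DSERMat Matrix in
theorem dser_iota_conj_general
    (R : Type*) [CommRing R] [Invertible (2 : R)]
    (n : ℕ) (m : ℕ)
    (φ : Matrix (Fin n) (Fin n) R) [Invertible φ]
    (u : Rˣ) :
    (∀ α : Matrix (Fin m) (Fin n) R,
      diagonal (iotaDiag n m u) * Emat φ α * diagonal (iotaDiag n m u⁻¹) =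
        Emat φ (lastRowScale (u : R) α)) ∧
    (∀ β : Matrix (Fin m) (Fin n) R,
      diagonal (iotaDiag n m u) * EmatStar φ β * diagonal (iotaDiag n m u⁻¹) =
        EmatStar φ (lastRowScale ((u⁻¹ : Rˣ) : R) β)) ∧
    (∀ G : (Matrix (Ind n m) (Ind n m) R)ˣ,
      (G : Matrix (Ind n m) (Ind n m) R) = diagonal (iotaDiag n m u) →
      ∀ x ∈ EOGrp φ m, G * x * G⁻¹ ∈ EOGrp φ m) := by
  have hu : diagonal (lastRowDiag m (u : R)) * diagonal (lastRowDiag m ((u⁻¹ : Rˣ) : R)) = 1 :=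
    diagonal_lastRowDiag_mul u.mul_inv
  refine ⟨fun α => ?_, fun β => ?_, fun G hG x hx => ?_⟩
  · rw [diagonal_iotaDiag, diagonal_iotaDiag, inv_inv, hyperbolicMat_mul_Emat_mul φ hu,
      lastRowScale_eq_diagonal_mul]
  · rw [diagonal_iotaDiag, diagonal_iotaDiag, inv_inv, hyperbolicMat_mul_EmatStar_mul φ hu,
      lastRowScale_eq_diagonal_mul, diagonal_transpose]
  · exact conj_mem_EOGrp_of_val_eq_hyperbolicMat φ hu (hG.trans (diagonal_iotaDiag u)) hx

open DSERMat Matrix in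
/-- Conjugation by ι(u) on the elementary generators, and the normalization
of `EO_R(q, h^m)` by the units ι(u). -/
theorem dser_iota_conj
    (R : Type*) [CommRing R] [Invertible (2 : R)]
    (n : ℕ) (hn : 1 ≤ n) (m : ℕ) (hm : 1 ≤ m)
    (φ : Matrix (Fin n) (Fin n) R) [Invertible φ] (hφ : φ.IsSymm)
    (u : Rˣ) :
    (∀ α : Matrix (Fin m) (Fin n) R,
      diagonal (iotaDiag n m u) * Emat φ α * diagonal (iotaDiag n m u⁻¹) =
        Emat φ (lastRowScale (u : R) α)) ∧
    (∀ β : Matrix (Fin m) (Fin n) R,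
      diagonal (iotaDiag n m u) * EmatStar φ β * diagonal (iotaDiag n m u⁻¹) =
        EmatStar φ (lastRowScale ((u⁻¹ : Rˣ) : R) β)) ∧
    (∀ G : (Matrix (Ind n m) (Ind n m) R)ˣ,
      (G : Matrix (Ind n m) (Ind n m) R) = diagonal (iotaDiag n m u) →
      ∀ x ∈ EOGrp φ m, G * x * G⁻¹ ∈ EOGrp φ m) :=
  dser_iota_conj_general R n m φ u
end
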